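/- Let G be a finite simple graph, c: V(G) → ℝ_{>0}, and κ: V(G) → ℤ with 0 ≤ κ(u) ≤ d(u) for all vertices u. Define β(G,c,κ) as the minimum of ∑_{u} c(u)ι(u) over all functions ι: V(G) → ℤ_{≥0} such that V(G) is (κ+ι)-degenerate. Then β(G,c,κ) ≤ ∑_{u∈V(G)} c(u)(d(u)−κ(u))(d(u)−κ(u)+1) / (2(d(u)+1)). -/

import Mathlib

variable {V : Type*} [Fintype V] [DecidableEq V]

/-- A list of vertices witnesses κ-degeneracy: each vertex has at most κ of it
neighbors among the earlier vertices of the ordering. -/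
def DegenList (G : SimpleGraph V) [DecidableRel G.Adj] (κ : V → ℤ) (l : List V) : Prop :=
  l.Nodup ∧ ∀ i : Fin l.length,
    ((((l.take i).toFinset).filter (fun v => G.Adj (l.get i) v)).card : ℤ) ≤ κ (l.get i)

/-- A set of vertices is κ-degenerate if it admits a suitable linear ordering. -/
def IsDegen (G : SimpleGraph V) [DecidableRel G.Adj] (κ : V → ℤ) (I : Finset V) : Prop :=
  ∃ l : List V, l.toFinset = I ∧ DegenList G κ l

/-- Minimum total c-weighted increase ι making the whole vertex set (κ+ι)-degenerate. -/
noncomputable def betaW (G : SimpleGraph V) [DecidableRel G.Adj] (c : V → ℝ) (κ : V → ℤ) : ℝ :=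
  sInf {x : ℝ | ∃ ι : V → ℤ, (∀ u, 0 ≤ ι u) ∧
    IsDegen G (fun u => κ u + ι u) Finset.univ ∧ x = ∑ u : V, c u * (ι u : ℝ)}

/-!
Order the vertices by a uniformly random bijection `e : V ≃ Fin n` and give each vertex `u` the
incentive `ι u = max(0, r(u) - κ u)`, where `r(u)` is the number of neighbours of `u` placed before
it; the ordering `e` then witnesses that `V` is `(κ + ι)`-degenerate. The number `r(u)` is the rank
of `u` within its closed neighbourhood `N[u]`, which is uniformly distributed on `{0, …, d(u)}`
(precomposing `e` with the transposition of two vertices of `N[u]` exchanges their ranks), so the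
expectation of `ι u` is `(d(u) - κ u)(d(u) - κ u + 1) / (2 (d(u) + 1))`. Some ordering does at
least as well as the average of `∑ c u * ι u`.
-/

open Finset Function

section Rank

variable {X α : Type*} [LinearOrder α]

def rankIn (S : Finset X) (p : X → α) (x : X) : ℕ := #{y ∈ S | p y < p x}

theorem rankIn_insert_self [DecidableEq X] (S : Finset X) (p : X → α) (x : X) :
    rankIn (insert x S) p x = rankIn S p x := by
  simp [rankIn, filter_insert]

variable {S : Finset X} {p : X → α}

theorem rankIn_lt_card {x : X} (hx : x ∈ S) : rankIn S p x < #S :=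
  card_lt_card <| filter_ssubset.mpr ⟨x, hx, lt_irrefl _⟩

theorem rankIn_lt_rankIn {x y : X} (hx : x ∈ S) (h : p x < p y) : rankIn S p x < rankIn S p y :=
  card_lt_card ⟨fun z hz => by
      simp only [mem_filter] at hz ⊢
      exact ⟨hz.1, hz.2.trans h⟩,
    fun hsub => lt_irrefl (p x) (mem_filter.mp (hsub (mem_filter.mpr ⟨hx, h⟩))).2⟩

theorem injOn_rankIn (hp : Injective p) : Set.InjOn (rankIn S p) S := by
  intro x hx y hy hxy
  rcases lt_trichotomy (p x) (p y) with h | h | h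
  · exact absurd hxy (rankIn_lt_rankIn hx h).ne
  · exact hp h
  · exact absurd hxy (rankIn_lt_rankIn hy h).ne'

theorem image_rankIn (hp : Injective p) : S.image (rankIn S p) = range #S :=
  eq_of_subset_of_card_le
    (fun _ hj => let ⟨_, hx, hxj⟩ := mem_image.mp hj; hxj ▸ mem_range.mpr (rankIn_lt_card hx))
    (by rw [card_range, card_image_of_injOn (injOn_rankIn hp)])

theorem sum_rankIn {M : Type*} [AddCommMonoid M] (hp : Injective p) (f : ℕ → M) :
    ∑ x ∈ S, f (rankIn S p x) = ∑ j ∈ range #S, f j := by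
  rw [← image_rankIn hp, sum_image (injOn_rankIn hp)]

theorem rankIn_comp_perm (π : Equiv.Perm X) (hπ : ∀ y, π y ∈ S ↔ y ∈ S) (x : X) :
    rankIn S (p ∘ π) x = rankIn S p (π x) :=
  card_nbij' π π.symm (fun y hy => by simp_all) (fun y hy => by simp_all [← hπ (π.symm y)])
    (fun y _ => by simp) (fun y _ => by simp)

end Rank

section RandomOrder

variable {X α M : Type*} [Fintype X] [DecidableEq X] [LinearOrder α] [Fintype α] [DecidableEq α]
  [AddCommMonoid M] {S : Finset X} (f : ℕ → M)

theorem sum_equiv_rankIn_eq {x y : X} (hx : x ∈ S) (hy : y ∈ S) :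
    ∑ e : X ≃ α, f (rankIn S e x) = ∑ e : X ≃ α, f (rankIn S e y) := by
  let swapFirst : (X ≃ α) ≃ (X ≃ α) :=
    ⟨(Equiv.swap x y).trans, (Equiv.swap x y).trans, fun e => by ext; simp,
      fun e => by ext; simp⟩
  have hswap (z : X) : Equiv.swap x y z ∈ S ↔ z ∈ S := by
    rw [Equiv.swap_apply_def]
    split_ifs <;> simp_all
  exact Fintype.sum_equiv swapFirst _ _ fun e => by
    simp [swapFirst, rankIn_comp_perm (p := e) _ hswap]

theorem card_smul_sum_equiv_rankIn {x : X} (hx : x ∈ S) :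
    #S • ∑ e : X ≃ α, f (rankIn S e x) = Fintype.card (X ≃ α) • ∑ j ∈ range #S, f j :=
  calc #S • ∑ e : X ≃ α, f (rankIn S e x)
      = ∑ y ∈ S, ∑ e : X ≃ α, f (rankIn S e y) := by
        rw [← sum_const, sum_congr rfl fun y hy => sum_equiv_rankIn_eq f hx hy]
    _ = ∑ e : X ≃ α, ∑ y ∈ S, f (rankIn S e y) := sum_comm
    _ = ∑ _e : X ≃ α, ∑ j ∈ range #S, f j := sum_congr rfl fun e _ => sum_rankIn e.injective f
    _ = Fintype.card (X ≃ α) • ∑ j ∈ range #S, f j := by rw [sum_const, card_univ]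

end RandomOrder

theorem sum_range_tsub_mul_two (n k : ℕ) :
    (∑ j ∈ range n, (j - k)) * 2 = (n - k) * (n - k - 1) := by
  rcases le_total k n with h | h
  · rw [range_eq_Ico, ← sum_Ico_consecutive _ (Nat.zero_le k) h,
      sum_eq_zero fun j hj => Nat.sub_eq_zero_of_le (mem_Ico.mp hj).2.le, zero_add,
      sum_Ico_eq_sum_range]
    simpa only [add_tsub_cancel_left] using sum_range_id_mul_two (n - k)
  · rw [sum_eq_zero fun j hj => Nat.sub_eq_zero_of_le ((mem_range.mp hj).le.trans h),
      Nat.sub_eq_zero_of_le h, zero_mul, zero_mul]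

theorem List.mem_take_ofFn_equiv {β : Type*} {n : ℕ} (f : Fin n ≃ β) (t : ℕ) (b : β) :
    b ∈ (List.ofFn f).take t ↔ (f.symm b : ℕ) < t := by
  simp only [List.mem_take_iff_getElem, List.getElem_ofFn, List.length_ofFn, lt_min_iff]
  constructor
  · rintro ⟨i, ⟨hit, -⟩, rfl⟩
    simpa using hit
  · intro h
    exact ⟨f.symm b, ⟨h, (f.symm b).isLt⟩, by simp⟩

section Graph

variable (G : SimpleGraph V) [DecidableRel G.Adj]

theorem isDegen_univ_of_rankIn_le {n : ℕ} (e : V ≃ Fin n) {κ : V → ℤ}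
    (h : ∀ u, (rankIn (G.neighborFinset u) e u : ℤ) ≤ κ u) : IsDegen G κ univ := by
  refine ⟨List.ofFn e.symm, ?_, List.nodup_ofFn.mpr e.symm.injective, fun i => ?_⟩
  · ext v
    simpa [List.mem_ofFn] using ⟨e v, by simp⟩
  · rw [List.get_ofFn]
    set u := e.symm (Fin.cast (by simp) i)
    convert h u using 3
    rw [rankIn]
    congr 1
    ext v
    simp [List.mem_take_ofFn_equiv, u, and_comm, ← Fin.val_fin_lt]

theorem sum_equiv_rankIn_tsub {α : Type*} [LinearOrder α] [Fintype α] [DecidableEq α]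
    (u : V) {k : ℕ} (hk : k ≤ G.degree u) :
    ∑ e : V ≃ α, ((rankIn (G.neighborFinset u) e u - k : ℕ) : ℝ) =
      Fintype.card (V ≃ α) *
        (((G.degree u : ℝ) - k) * ((G.degree u : ℝ) - k + 1) / (2 * (G.degree u + 1))) := by
  set d := G.degree u
  have hcard : #(insert u (G.neighborFinset u)) = d + 1 := by
    rw [card_insert_of_notMem (by simp), G.card_neighborFinset_eq_degree]
  have key := card_smul_sum_equiv_rankIn (α := α) (fun j => ((j - k : ℕ) : ℝ))
    (mem_insert_self u (G.neighborFinset u))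
  simp only [rankIn_insert_self, hcard, nsmul_eq_mul] at key
  have gauss : (∑ j ∈ range (d + 1), ((j - k : ℕ) : ℝ)) * 2 = (d - k) * (d - k + 1) := by
    have h := sum_range_tsub_mul_two (d + 1) k
    rw [show d + 1 - k = d - k + 1 by omega, Nat.add_sub_cancel, mul_comm (d - k + 1)] at h
    rw [← Nat.cast_sum, ← Nat.cast_sub hk]
    exact_mod_cast h
  rw [← gauss]
  field_simp
  push_cast at key
  linear_combination key

theorem betaW_le_of_isDegen {c : V → ℝ} (hc : ∀ u, 0 ≤ c u) {κ ι : V → ℤ}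
    (hι : ∀ u, 0 ≤ ι u) (hdeg : IsDegen G (fun u => κ u + ι u) univ) :
    betaW G c κ ≤ ∑ u, c u * ι u :=
  csInf_le ⟨0, by
      rintro _ ⟨ι', hι', -, rfl⟩
      exact sum_nonneg fun u _ => mul_nonneg (hc u) (Int.cast_nonneg_iff.mpr (hι' u))⟩
    ⟨ι, hι, hdeg, rfl⟩

end Graph

/-- Theorem 1 of the paper: weighted partial-incentives bound. -/
theorem weighted_partial_incentives (G : SimpleGraph V) [DecidableRel G.Adj]
    (c : V → ℝ) (hc : ∀ u, 0 < c u)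
    (κ : V → ℤ) (hκ : ∀ u, 0 ≤ κ u ∧ κ u ≤ (G.degree u : ℤ)) :
    betaW G c κ ≤ ∑ u : V,
      c u * (((G.degree u : ℝ) - κ u) * ((G.degree u : ℝ) - κ u + 1)) / (2 * (G.degree u + 1)) := by
  let excess (e : V ≃ Fin (Fintype.card V)) (u : V) : ℕ :=
    rankIn (G.neighborFinset u) e u - (κ u).toNat
  have hsum : ∑ e, ∑ u, c u * (excess e u : ℝ) =
      ∑ e : V ≃ Fin (Fintype.card V), ∑ u : V,
        c u * (((G.degree u : ℝ) - κ u) * ((G.degree u : ℝ) - κ u + 1)) /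
          (2 * (G.degree u + 1)) := by
    rw [sum_comm, sum_const, card_univ, nsmul_eq_mul, mul_sum]
    refine sum_congr rfl fun u _ => ?_
    have hκ_toNat : ((κ u).toNat : ℝ) = κ u := by exact_mod_cast Int.toNat_of_nonneg (hκ u).1
    rw [← mul_sum, sum_equiv_rankIn_tsub G u (by have := hκ u; omega), hκ_toNat]
    ring
  have : Nonempty (V ≃ Fin (Fintype.card V)) := ⟨Fintype.equivFin V⟩
  obtain ⟨e, -, he⟩ := exists_le_of_sum_le univ_nonempty hsum.le
  calc betaW G c κ ≤ ∑ u, c u * ((excess e u : ℤ) : ℝ) :=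
        betaW_le_of_isDegen G (fun u => (hc u).le) (fun u => Int.natCast_nonneg _)
          (isDegen_univ_of_rankIn_le G e fun u => by have := (hκ u).1; dsimp only [excess]; omega)
    _ ≤ _ := by simpa using he
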